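/- arXiv:2601.08425 — 6 statements merged into one kernel-verified Lean document; each statement's English description precedes it below -/
import Mathlib

section
/- Let N ≥ 1, h = 20N², and for 0 ≤ x, y ≤ N define z(x,y) = (h² + x² − y²)/(2h) and r(x,y) = √(y² + z(x,y)²). Then r(x,y) < h/2 + 1/10. -/
theorem stmt_3 (N h x y z r : ℝ) (hN : 1 ≤ N) (hh : h = 20 * N ^ 2)
    (hx0 : 0 ≤ x) (hxN : x ≤ N) (hy0 : 0 ≤ y) (hyN : y ≤ N)
    (hz : z = (h ^ 2 + x ^ 2 - y ^ 2) / (2 * h))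
    (hr : r = Real.sqrt (y ^ 2 + z ^ 2)) :
    r < h / 2 + 1 / 10 := by
  have hN0 : (0:ℝ) < N := by linarith
  have hhpos : 0 < h := by nlinarith
  have hzval : z * (2 * h) = h ^ 2 + x ^ 2 - y ^ 2 := by
    rw [hz]; field_simp
  have hpos : 0 < h / 2 + 1 / 10 := by positivity
  rw [hr, show h / 2 + 1 / 10 = Real.sqrt ((h / 2 + 1 / 10) ^ 2) by
    rw [Real.sqrt_sq hpos.le]]
  apply Real.sqrt_lt_sqrt (by positivity)
  have hxh : x ^ 2 ≤ h / 20 := by nlinarith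
  have hyh : y ^ 2 ≤ h / 20 := by nlinarith
  have hzub : z ≤ h / 2 + 1 / 40 := by nlinarith
  have hh20 : 20 ≤ h := by nlinarith
  have hz0 : 0 ≤ z := by nlinarith [mul_pos hhpos hhpos]
  nlinarith [sq_nonneg (z - h/2 - 1/40), mul_le_mul hzub hzub hz0 (by linarith)]
end

section
/- Let N ≥ 1, h = 20N², and let x, y ∈ [0, N], z = (h²+x²−y²)/(2h), r = √(y²+z²). For any real x' with |x − x'| ≥ 1, the distance from (x, y, z) to (x', 0, −1/2) is strictly greater than r + 1/2. Hence the ball of center (x,y,z) and radius r is disjoint from any ball of radius 1/2 centered at (x',0,−1/2). -/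
/-! Expanding the squares, `dist² - (r + 1/2)² = ((x - x')² - 1) + (z + 1 - r)`, so it suffices that
`r < z + 1`, i.e. `y² < 2z + 1`. This holds because the centre is very high:
`2z + 1 ≥ h + 1 - y²/h`, which exceeds `y²` as soon as `y² < h`, and `y² ≤ N² < h`. -/

noncomputable def pt3 (a b c : ℝ) : EuclideanSpace ℝ (Fin 3) := WithLp.toLp 2 ![a, b, c]

theorem dist_pt3 (a b c a' b' c' : ℝ) :
    dist (pt3 a b c) (pt3 a' b' c') = √((a - a') ^ 2 + (b - b') ^ 2 + (c - c') ^ 2) := by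
  simp [EuclideanSpace.dist_eq, pt3, Fin.sum_univ_three, Real.dist_eq, sq_abs, add_assoc]

theorem sq_lt_two_mul_div_add_one {h x y : ℝ} (hh : 0 < h) (hyh : y ^ 2 < h) :
    y ^ 2 < 2 * ((h ^ 2 + x ^ 2 - y ^ 2) / (2 * h)) + 1 := by
  rw [mul_div_assoc', mul_div_mul_left _ _ two_ne_zero, ← sub_lt_iff_lt_add, lt_div_iff₀ hh]
  nlinarith [mul_lt_mul_of_pos_right hyh hh, sq_nonneg x]

theorem sqrt_add_half_lt_dist_pt3 {x x' y z : ℝ} (hxx' : 1 ≤ |x - x'|) (hyz : y ^ 2 < 2 * z + 1) :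
    √(y ^ 2 + z ^ 2) + 1 / 2 < dist (pt3 x y z) (pt3 x' 0 (-1/2)) := by
  have hr : √(y ^ 2 + z ^ 2) < z + 1 := by
    rw [Real.sqrt_lt' (by nlinarith)]
    linarith
  have hxx2 : 1 ≤ (x - x') ^ 2 := by
    simpa [sq_abs] using pow_le_pow_left₀ zero_le_one hxx' 2
  rw [dist_pt3, Real.lt_sqrt (by positivity), add_sq, Real.sq_sqrt (by positivity)]
  nlinarith

theorem stmt_5_general (N h x x' y z r : ℝ) (hN : 1 ≤ N) (hh : h = 20 * N ^ 2)
    (hy : y ∈ Set.Icc 0 N)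
    (hz : z = (h ^ 2 + x ^ 2 - y ^ 2) / (2 * h))
    (hr : r = Real.sqrt (y ^ 2 + z ^ 2))
    (hxx' : 1 ≤ |x - x'|) :
    dist (pt3 x y z) (pt3 x' 0 (-1/2)) > r + 1/2 ∧
    Disjoint (Metric.closedBall (pt3 x y z) r)
      (Metric.closedBall (pt3 x' 0 (-1/2)) (1/2)) := by
  have hyh : y ^ 2 < h := by nlinarith [hy.1, hy.2]
  have hdist : r + 1 / 2 < dist (pt3 x y z) (pt3 x' 0 (-1/2)) := by
    subst hr hz
    exact sqrt_add_half_lt_dist_pt3 hxx' (sq_lt_two_mul_div_add_one (by nlinarith) hyh)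
  exact ⟨hdist, Metric.closedBall_disjoint_closedBall hdist⟩

theorem stmt_5 (N h x x' y z r : ℝ) (hN : 1 ≤ N) (hh : h = 20 * N ^ 2)
    (hx : x ∈ Set.Icc 0 N) (hy : y ∈ Set.Icc 0 N)
    (hz : z = (h ^ 2 + x ^ 2 - y ^ 2) / (2 * h))
    (hr : r = Real.sqrt (y ^ 2 + z ^ 2))
    (hxx' : 1 ≤ |x - x'|) :
    dist (pt3 x y z) (pt3 x' 0 (-1/2)) > r + 1/2 ∧
    Disjoint (Metric.closedBall (pt3 x y z) r)
      (Metric.closedBall (pt3 x' 0 (-1/2)) (1/2)) :=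
  stmt_5_general N h x x' y z r hN hh hy hz hr hxx'
end

section
/- Let N ≥ 1, h = 20N², x, y ∈ [0, N], z = (h²+x²−y²)/(2h). Then y² < z/8, and consequently √(y² + z²) < z + 1/4. -/
theorem stmt_6 (N h x y z : ℝ) (hN : 1 ≤ N) (hh : h = 20 * N ^ 2)
    (hx0 : 0 ≤ x) (hxN : x ≤ N) (hy0 : 0 ≤ y) (hyN : y ≤ N)
    (hz : z = (h ^ 2 + x ^ 2 - y ^ 2) / (2 * h)) :
    y ^ 2 < z / 8 ∧ Real.sqrt (y ^ 2 + z ^ 2) < z + 1 / 4 := by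
  subst hh
  have hNpos : (0:ℝ) < N := lt_of_lt_of_le one_pos hN
  have hN2 : (1:ℝ) ≤ N ^ 2 := one_le_pow₀ hN
  have hy2 : y ^ 2 ≤ N ^ 2 := by nlinarith
  have hx2 : x ^ 2 ≤ N ^ 2 := by nlinarith
  have hzval : z * (40 * N ^ 2) = (20 * N ^ 2) ^ 2 + x ^ 2 - y ^ 2 := by
    rw [hz, show (2:ℝ)*(20*N^2) = 40*N^2 by ring, div_mul_cancel₀ _ (by positivity : (40:ℝ)*N^2 ≠ 0)]
  have hkey : y ^ 2 * (40 * N ^ 2) < (z / 8) * (40 * N ^ 2) := by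
    have h4 : 1 ≤ N ^ 4 := by nlinarith
    nlinarith [mul_le_mul_of_nonneg_left hy2 (sq_nonneg N), sq_nonneg x]
  have h1 : y ^ 2 < z / 8 := by
    have := mul_lt_mul_of_pos_right (lt_of_mul_lt_mul_right hkey (by positivity)) (by positivity : (0:ℝ) < 1)
    simpa using this
  have hzpos : 0 < z := by nlinarith
  refine ⟨h1, ?_⟩
  have : Real.sqrt (y ^ 2 + z ^ 2) < Real.sqrt ((z + 1/4) ^ 2) := by
    apply Real.sqrt_lt_sqrt (by positivity)
    nlinarith
  rwa [Real.sqrt_sq (by positivity)] at this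
end

section
/- For every graph G on n vertices, define the split graph G' on vertex set A ∪ B with A = {a₁,…,aₙ}, B = {b₁,…,bₙ}, where A is a clique, B is independent, and aᵢ is adjacent to bⱼ iff i = j or vᵢvⱼ ∈ E(G). Then for every k, G has a dominating set of size at most k if and only if G' has a dominating set of size at most k. -/
/-
A dominating set `D` of `G` is also one of `G'` once placed in the clique `A`: a clique vertex
`aⱼ` outside it has `vⱼ ∉ D`, so `D` is nonempty and any of its elements dominates `aⱼ`;
and `bⱼ` is dominated by `aⱼ` or by `aᵢ` for a neighbour `vᵢ ∈ D` of `vⱼ`.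
Conversely, forgetting the side of each vertex of a dominating set of `G'` gives a dominating set of
`G` that is no larger: a vertex `vⱼ` missed by it has `aⱼ, bⱼ ∉ D'`, so `bⱼ` is dominated by some
`aᵢ` with `vᵢvⱼ ∈ E(G)`.
-/

/-- The split graph `G'` built from a graph `G` on `Fin n`: the left copy `A` is a
clique, the right copy `B` is independent, and `aᵢ ~ bⱼ` iff `i = j` or `vᵢvⱼ ∈ E(G)`. -/
def splitGraph {n : ℕ} (G : SimpleGraph (Fin n)) : SimpleGraph (Fin n ⊕ Fin n) where
  Adj u v :=
    match u, v with
    | .inl i, .inl j => i ≠ j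
    | .inl i, .inr j => i = j ∨ G.Adj i j
    | .inr i, .inl j => j = i ∨ G.Adj j i
    | .inr _, .inr _ => False
  symm := by
    constructor
    rintro (i | i) (j | j) h <;> simp_all [ne_comm]
  loopless := by
    constructor
    rintro (i | i) h <;> simp_all [G.loopless.irrefl i]

/-- `D` is a dominating set of `G`. -/
def IsDomSet {V : Type*} (G : SimpleGraph V) (D : Finset V) : Prop :=
  ∀ v, v ∉ D → ∃ d ∈ D, G.Adj d v

namespace splitGraph

variable {n : ℕ} (G : SimpleGraph (Fin n))

theorem adj_inl_inl {i j : Fin n} : (splitGraph G).Adj (.inl i) (.inl j) ↔ i ≠ j := Iff.rfl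

theorem adj_inl_inr {i j : Fin n} : (splitGraph G).Adj (.inl i) (.inr j) ↔ i = j ∨ G.Adj i j :=
  Iff.rfl

theorem not_adj_inr_inr {i j : Fin n} : ¬(splitGraph G).Adj (.inr i) (.inr j) := id

theorem isDomSet_map_inl {D : Finset (Fin n)} (hD : IsDomSet G D) :
    IsDomSet (splitGraph G) (D.map .inl) := by
  rintro (j | j) hj
  · have hjD : j ∉ D := fun h => hj (Finset.mem_map_of_mem _ h)
    obtain ⟨d, hd, hdj⟩ := hD j hjD
    exact ⟨.inl d, Finset.mem_map_of_mem _ hd, (adj_inl_inl G).2 hdj.ne⟩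
  · by_cases hjD : j ∈ D
    · exact ⟨.inl j, Finset.mem_map_of_mem _ hjD, Or.inl rfl⟩
    · obtain ⟨d, hd, hdj⟩ := hD j hjD
      exact ⟨.inl d, Finset.mem_map_of_mem _ hd, Or.inr hdj⟩

theorem isDomSet_image_elim {D' : Finset (Fin n ⊕ Fin n)} (hD' : IsDomSet (splitGraph G) D') :
    IsDomSet G (D'.image (Sum.elim id id)) := by
  intro j hj
  have hinl : .inl j ∉ D' := fun h => hj (Finset.mem_image_of_mem _ h)
  have hinr : .inr j ∉ D' := fun h => hj (Finset.mem_image_of_mem _ h)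
  obtain ⟨i | i, hd, hij⟩ := hD' (.inr j) hinr
  · rcases (adj_inl_inr G).1 hij with rfl | hij
    · exact absurd hd hinl
    · exact ⟨i, Finset.mem_image_of_mem _ hd, hij⟩
  · exact absurd hij (not_adj_inr_inr G)

end splitGraph

theorem stmt_7 {n : ℕ} (G : SimpleGraph (Fin n)) (k : ℕ) :
    (∃ D : Finset (Fin n), IsDomSet G D ∧ D.card ≤ k) ↔
    (∃ D' : Finset (Fin n ⊕ Fin n), IsDomSet (splitGraph G) D' ∧ D'.card ≤ k) := by
  constructor
  · rintro ⟨D, hD, hk⟩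
    exact ⟨D.map .inl, splitGraph.isDomSet_map_inl G hD, (Finset.card_map _).trans_le hk⟩
  · rintro ⟨D', hD', hk⟩
    exact ⟨D'.image (Sum.elim id id), splitGraph.isDomSet_image_elim G hD',
      Finset.card_image_le.trans hk⟩
end

section
/- Let n ≥ 1, t ≥ 1 be integers with ε = 1/(3tn²). Then 2 − 2cos(1/n) + (1 − tε)² > 1; equivalently, two unit-diameter balls with centers (1, φ, z) and (1, φ', z') in cylindrical coordinates with |φ − φ'| ≥ 1/n and |z − z'| ≥ 1 − tε do not intersect. -/
/-- The point of ℝ³ with cylindrical coordinates (r, φ, z). -/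
noncomputable def cyl (r φ z : ℝ) : EuclideanSpace ℝ (Fin 3) :=
  pt3 (r * Real.cos φ) (r * Real.sin φ) z

/-!
The squared distance between the centres `cyl 1 φ z` and `cyl 1 φ' z'` is
`2 - 2 cos (φ - φ') + (z - z')²`. Since `cos x < 1 - x²/2 + x⁴/24`, an angular gap of
`x = 1/n` contributes more than `x² - x⁴/12 ≥ 2x²/3`, which beats the loss
`2tε ≤ 2x²/3` in the vertical term, so the centres are more than `1` apart.
-/

open Real Metric

lemma dist_cyl_sq (r r' φ φ' z z' : ℝ) :
    dist (cyl r φ z) (cyl r' φ' z') ^ 2 =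
      r ^ 2 + r' ^ 2 - 2 * r * r' * cos (φ - φ') + (z - z') ^ 2 := by
  rw [EuclideanSpace.dist_eq, sq_sqrt (by positivity)]
  simp only [cyl, pt3, dist_eq, sq_abs, Fin.sum_univ_three, Fin.isValue, Matrix.cons_val_zero,
    Matrix.cons_val_one, Matrix.cons_val, cos_sub, add_left_inj]
  nlinarith [sin_sq_add_cos_sq φ, sin_sq_add_cos_sq φ']

/-- Writing `cos x = 1 - 2 sin² (x/2)`, this is `sin y > y - y³/6` squared at `y = x/2`
(for `x² ≤ 24`; beyond that the right-hand side exceeds `1`). -/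
lemma cos_lt_one_sub_sq_div_two_add_pow_four_div {x : ℝ} (hx : x ≠ 0) :
    cos x < 1 - x ^ 2 / 2 + x ^ 4 / 24 := by
  wlog hpos : 0 < x generalizing x
  · have hneg : 0 < -x := neg_pos.2 (lt_of_le_of_ne (not_lt.1 hpos) hx)
    simpa [show (-x) ^ 4 = x ^ 4 by ring] using this hneg.ne' hneg
  rcases le_or_gt (x ^ 2) 24 with hsmall | hlarge
  · have hsin := sin_gt_sub_cube (half_pos hpos)
    have hbase : 0 ≤ x / 2 - (x / 2) ^ 3 / 6 := by nlinarith
    have hsin_sq := pow_lt_pow_left₀ hsin hbase two_ne_zero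
    have hcos : cos x = 1 - 2 * sin (x / 2) ^ 2 := by
      rw [← cos_two_mul_eq_one_sub, mul_div_cancel₀ x two_ne_zero]
    nlinarith [pow_pos hpos 6]
  · nlinarith [cos_le_one x]

lemma one_lt_two_sub_two_cos_add_sq {x s : ℝ} (hx : x ≠ 0) (hx4 : x ^ 2 ≤ 4)
    (hs : s ≤ x ^ 2 / 3) : 1 < 2 - 2 * cos x + (1 - s) ^ 2 := by
  nlinarith [cos_lt_one_sub_sq_div_two_add_pow_four_div hx, sq_nonneg s,
    mul_nonneg (sq_nonneg x) (sub_nonneg.2 hx4)]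

lemma disjoint_closedBall_cyl {φ φ' z z' : ℝ} (h : 1 < 2 - 2 * cos (φ - φ') + (z - z') ^ 2) :
    Disjoint (closedBall (cyl 1 φ z) (1 / 2)) (closedBall (cyl 1 φ' z') (1 / 2)) := by
  apply closedBall_disjoint_closedBall
  have hsq : 1 < dist (cyl 1 φ z) (cyl 1 φ' z') ^ 2 := by
    rw [dist_cyl_sq]
    linarith
  linarith [(one_lt_sq_iff₀ dist_nonneg).1 hsq]

theorem stmt_15_general (n t : ℕ) (hn : 1 ≤ n) (ε : ℝ)
    (hε : ε = 1 / (3 * t * n ^ 2)) :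
    2 - 2 * Real.cos (1 / n) + (1 - t * ε) ^ 2 > 1 ∧
    ∀ φ φ' z z' : ℝ, 1 / n ≤ |φ - φ'| → |φ - φ'| ≤ Real.pi → 1 - t * ε ≤ |z - z'| →
      Disjoint (Metric.closedBall (cyl 1 φ z) (1/2))
        (Metric.closedBall (cyl 1 φ' z') (1/2)) := by
  have hn0 : (0 : ℝ) < n := by exact_mod_cast hn
  have hx : (0 : ℝ) < 1 / n := by positivity
  have hx1 : (1 : ℝ) / n ≤ 1 := (div_le_one hn0).2 (by exact_mod_cast hn)
  have hx4 : ((1 : ℝ) / n) ^ 2 ≤ 4 := by nlinarith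
  -- `t ε = 1/(3n²)`, except that it is `0` when `t = 0`
  have hs : t * ε ≤ (1 / n) ^ 2 / 3 := by
    calc (t : ℝ) * ε = (t / t) * ((1 / n) ^ 2 / 3) := by rw [hε]; ring
      _ ≤ (1 / n) ^ 2 / 3 := mul_le_of_le_one_left (by positivity) (div_self_le_one _)
  refine ⟨one_lt_two_sub_two_cos_add_sq hx.ne' hx4 hs,
    fun φ φ' z z' hφ hπ hz => disjoint_closedBall_cyl ?_⟩
  have hcos : cos (φ - φ') ≤ cos (1 / n) := by
    rw [← cos_abs]
    exact cos_le_cos_of_nonneg_of_le_pi hx.le hπ hφ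
  have hz2 : (1 - t * ε) ^ 2 ≤ (z - z') ^ 2 := by
    rw [← sq_abs (z - z')]
    exact pow_le_pow_left₀ (by nlinarith) hz 2
  linarith [one_lt_two_sub_two_cos_add_sq hx.ne' hx4 hs]

theorem stmt_15 (n t : ℕ) (hn : 1 ≤ n) (ht : 1 ≤ t) (ε : ℝ)
    (hε : ε = 1 / (3 * t * n ^ 2)) :
    2 - 2 * Real.cos (1 / n) + (1 - t * ε) ^ 2 > 1 ∧
    ∀ φ φ' z z' : ℝ, 1 / n ≤ |φ - φ'| → |φ - φ'| ≤ Real.pi → 1 - t * ε ≤ |z - z'| →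
      Disjoint (Metric.closedBall (cyl 1 φ z) (1/2))
        (Metric.closedBall (cyl 1 φ' z') (1/2)) :=
  stmt_15_general n t hn ε hε
end

section
/- Let φ be a CNF formula in which every clause has at least two literals. Define the graph G_φ with: a triangle {x_j^T, x_j^F, e_j} for each variable x_j; a single vertex c_k for each clause; for each literal occurrence l_i a path l_i^1 − l_i^2 − l_i^3 plus an ear vertex adjacent to l_i^2 and l_i^3; edges (c_k, l_i^3) when l_i occurs in c_k; edge (x_j^T, l_i^1) if l_i = x_j and (x_j^F, l_i^1) if l_i = ¬x_j; and all edges among {l_i^1}. Then G_φ has a dominating set of size n + t (n = number of variables, t = number of literal occurrences) if and only if φ is satisfiable. -/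
/-- A CNF formula over variables `x₀, …, x_{n-1}`: a list of clauses, each clause a
list of literals, where the literal `(b, j)` is `x_j` if `b = true` and `¬x_j` else. -/
structure CNF (n : ℕ) where
  clauses : List (List (Bool × Fin n))

def CNF.Satisfiable {n : ℕ} (φ : CNF n) : Prop :=
  ∃ σ : Fin n → Bool, ∀ c ∈ φ.clauses, ∃ l ∈ c, σ l.2 = l.1

/-- Indices of literal occurrences of `φ`. -/
abbrev CNF.Occ {n : ℕ} (φ : CNF n) :=
  Σ k : Fin φ.clauses.length, Fin (φ.clauses.get k).length

/-- The literal at occurrence `o`. -/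
def CNF.lit {n : ℕ} (φ : CNF n) (o : φ.Occ) : Bool × Fin n :=
  (φ.clauses.get o.1).get o.2

/-- The number `t` of literal occurrences of `φ`. -/
def CNF.t {n : ℕ} (φ : CNF n) : ℕ := (φ.clauses.map List.length).sum

/-- Vertices of the gadget graph `G_φ`. -/
inductive GVert {n : ℕ} (φ : CNF n) : Type
  | varT (j : Fin n)        -- xⱼᵀ
  | varF (j : Fin n)        -- xⱼᶠ
  | varEar (j : Fin n)      -- ear of the variable gadget
  | clause (k : Fin φ.clauses.length)
  | lit1 (o : φ.Occ)
  | lit2 (o : φ.Occ)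
  | lit3 (o : φ.Occ)
  | litEar (o : φ.Occ)      -- ear of the literal gadget

/-- Base edge relation of `G_φ` (symmetrized by `SimpleGraph.fromRel`). -/
def baseRel {n : ℕ} (φ : CNF n) : GVert φ → GVert φ → Prop
  | .varT j, .varF j' => j = j'
  | .varT j, .varEar j' => j = j'
  | .varF j, .varEar j' => j = j'
  | .lit1 o, .lit2 o' => o = o'
  | .lit2 o, .lit3 o' => o = o'
  | .litEar o, .lit2 o' => o = o'
  | .litEar o, .lit3 o' => o = o'
  | .clause k, .lit3 o => o.1 = k
  | .varT j, .lit1 o => φ.lit o = (true, j)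
  | .varF j, .lit1 o => φ.lit o = (false, j)
  | .lit1 _, .lit1 _ => True
  | _, _ => False

/-- The gadget graph `G_φ`. -/
def Gphi {n : ℕ} (φ : CNF n) : SimpleGraph (GVert φ) := SimpleGraph.fromRel (baseRel φ)

/-! Every variable triangle and every literal gadget `l², l³` carries an ear whose closed
neighbourhood stays inside the gadget, so a dominating set meets all `n + t` gadgets; if it has
only `n + t` vertices, it holds exactly one vertex of each gadget and no clause or `l¹` vertex.
A clause vertex is then dominated by some `l³ ∈ D`, so `l² ∉ D` and `l¹` must be dominated by
the variable vertex `x_jᵀ` or `x_jᶠ` matching the literal: the assignment read off the triangles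
makes `l` true. Conversely, a satisfying assignment gives the dominating set that takes the true
vertex of each triangle, and `l³` or `l²` in each literal gadget according as `l` is true or not. -/

open Finset

theorem isDomSet_iff_forall_exists_eq_or_adj {V : Type*} {G : SimpleGraph V} {D : Finset V} :
    IsDomSet G D ↔ ∀ v, ∃ d ∈ D, d = v ∨ G.Adj d v := by
  refine ⟨fun hD v => ?_, fun hD v hv => ?_⟩
  · by_cases hv : v ∈ D
    · exact ⟨v, hv, .inl rfl⟩
    · obtain ⟨d, hd, hadj⟩ := hD v hv
      exact ⟨d, hd, .inr hadj⟩
  · obtain ⟨d, hd, rfl | hadj⟩ := hD v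
    exacts [absurd hd hv, ⟨d, hd, hadj⟩]

theorem ne_none_and_injOn_of_card_le {V ι : Type*} [Fintype ι] {g : V → Option ι}
    {D : Finset V} (hcover : ∀ i, ∃ d ∈ D, g d = some i) (hcard : #D ≤ Fintype.card ι) :
    (∀ d ∈ D, g d ≠ none) ∧ Set.InjOn g D := by
  classical
  have hsub : univ.image some ⊆ D.image g := by
    intro x hx
    obtain ⟨i, -, rfl⟩ := mem_image.mp hx
    obtain ⟨d, hd, hdi⟩ := hcover i
    exact mem_image.mpr ⟨d, hd, hdi⟩
  have hle : #D ≤ #(univ.image (some : ι → Option ι)) := by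
    rwa [card_image_of_injective _ (Option.some_injective ι), card_univ]
  have himage : univ.image some = D.image g :=
    eq_of_subset_of_card_le hsub (card_image_le.trans hle)
  refine ⟨fun d hd hnone => ?_, card_image_iff.mp (le_antisymm card_image_le (himage ▸ hle))⟩
  have : g d ∈ univ.image some := himage ▸ mem_image_of_mem g hd
  simp [hnone] at this

theorem CNF.card_occ {n : ℕ} (φ : CNF n) : Fintype.card φ.Occ = φ.t := by
  simp [CNF.t, Fintype.card_sigma, ← Fin.sum_univ_fun_getElem]

namespace Gphi

variable {n : ℕ} {φ : CNF n}

def gadget : GVert φ → Option (Fin n ⊕ φ.Occ)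
  | .varT j | .varF j | .varEar j => some (.inl j)
  | .lit2 o | .lit3 o | .litEar o => some (.inr o)
  | .clause _ | .lit1 _ => none

theorem adj_varEar {d : GVert φ} {j : Fin n} :
    (Gphi φ).Adj d (.varEar j) ↔ d = .varT j ∨ d = .varF j := by
  cases d <;> simp [Gphi, baseRel, eq_comm]

theorem adj_litEar {d : GVert φ} {o : φ.Occ} :
    (Gphi φ).Adj d (.litEar o) ↔ d = .lit2 o ∨ d = .lit3 o := by
  cases d <;> simp [Gphi, baseRel, eq_comm]

theorem adj_clause {d : GVert φ} {k : Fin φ.clauses.length} :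
    (Gphi φ).Adj d (.clause k) ↔ ∃ o : φ.Occ, o.1 = k ∧ d = .lit3 o := by
  cases d <;> simp [Gphi, baseRel, eq_comm]

theorem adj_lit1 {d : GVert φ} {o : φ.Occ} :
    (Gphi φ).Adj d (.lit1 o) ↔ (∃ j, d = .varT j ∧ φ.lit o = (true, j)) ∨
      (∃ j, d = .varF j ∧ φ.lit o = (false, j)) ∨ d = .lit2 o ∨ ∃ o', o' ≠ o ∧ d = .lit1 o' := by
  cases d <;> simp [Gphi, baseRel, eq_comm]

theorem gadget_cover {D : Finset (GVert φ)} (hD : IsDomSet (Gphi φ) D) (x : Fin n ⊕ φ.Occ) :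
    ∃ d ∈ D, gadget d = some x := by
  rw [isDomSet_iff_forall_exists_eq_or_adj] at hD
  rcases x with j | o
  · obtain ⟨d, hd, rfl | hadj⟩ := hD (.varEar j)
    · exact ⟨_, hd, rfl⟩
    · obtain rfl | rfl := adj_varEar.mp hadj <;> exact ⟨_, hd, rfl⟩
  · obtain ⟨d, hd, rfl | hadj⟩ := hD (.litEar o)
    · exact ⟨_, hd, rfl⟩
    · obtain rfl | rfl := adj_litEar.mp hadj <;> exact ⟨_, hd, rfl⟩

open Classical in
noncomputable def assignmentOf (D : Finset (GVert φ)) (j : Fin n) : Bool :=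
  decide (.varT j ∈ D)

theorem assignmentOf_lit_of_lit3_mem {D : Finset (GVert φ)} (hD : IsDomSet (Gphi φ) D)
    (hsome : ∀ d ∈ D, gadget d ≠ none) (hinj : Set.InjOn gadget (D : Set (GVert φ)))
    {o : φ.Occ} (h3 : .lit3 o ∈ D) :
    assignmentOf D (φ.lit o).2 = (φ.lit o).1 := by
  have h2 : .lit2 o ∉ D := fun h2 => by simpa using hinj h2 h3 rfl
  obtain ⟨d, hd, hadj⟩ := hD (.lit1 o) (fun h1 => hsome _ h1 rfl)
  obtain ⟨j, rfl, hlit⟩ | ⟨j, rfl, hlit⟩ | rfl | ⟨o', -, rfl⟩ := adj_lit1.mp hadj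
  · simp [assignmentOf, hlit, hd]
  · have hT : .varT j ∉ D := fun hT => by simpa using hinj hT hd rfl
    simp [assignmentOf, hlit, hT]
  · exact absurd hd h2
  · exact absurd rfl (hsome _ hd)

theorem satisfies_assignmentOf {D : Finset (GVert φ)} (hD : IsDomSet (Gphi φ) D)
    (hsome : ∀ d ∈ D, gadget d ≠ none) (hinj : Set.InjOn gadget (D : Set (GVert φ))) :
    ∀ c ∈ φ.clauses, ∃ l ∈ c, assignmentOf D l.2 = l.1 := by
  intro c hc
  obtain ⟨k, rfl⟩ := List.get_of_mem hc
  obtain ⟨d, hd, hadj⟩ := hD (.clause k) (fun h => hsome _ h rfl)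
  obtain ⟨o, rfl, rfl⟩ := adj_clause.mp hadj
  exact ⟨φ.lit o, List.get_mem _ _, assignmentOf_lit_of_lit3_mem hD hsome hinj hd⟩

theorem satisfiable_of_isDomSet {D : Finset (GVert φ)} (hD : IsDomSet (Gphi φ) D)
    (hcard : #D = n + φ.t) : φ.Satisfiable := by
  obtain ⟨hsome, hinj⟩ := ne_none_and_injOn_of_card_le (gadget_cover hD)
    (by simp [hcard, φ.card_occ])
  exact ⟨assignmentOf D, satisfies_assignmentOf hD hsome hinj⟩

def dominatorOf (σ : Fin n → Bool) : Fin n ⊕ φ.Occ → GVert φ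
  | .inl j => if σ j then .varT j else .varF j
  | .inr o => if σ (φ.lit o).2 = (φ.lit o).1 then .lit3 o else .lit2 o

theorem gadget_dominatorOf (σ : Fin n → Bool) (x : Fin n ⊕ φ.Occ) :
    gadget (dominatorOf σ x) = some x := by
  rcases x with j | o <;> simp only [dominatorOf] <;> split_ifs <;> rfl

theorem dominatorOf_injective (σ : Fin n → Bool) : Function.Injective (dominatorOf (φ := φ) σ) :=
  fun x y h => Option.some_injective _ <| by rw [← gadget_dominatorOf σ, h, gadget_dominatorOf]

def domSetOf (σ : Fin n → Bool) : Finset (GVert φ) :=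
  univ.map ⟨dominatorOf σ, dominatorOf_injective σ⟩

theorem card_domSetOf (σ : Fin n → Bool) : #(domSetOf (φ := φ) σ) = n + φ.t := by
  simp [domSetOf, φ.card_occ]

theorem isDomSet_domSetOf {σ : Fin n → Bool} (hσ : ∀ c ∈ φ.clauses, ∃ l ∈ c, σ l.2 = l.1) :
    IsDomSet (Gphi φ) (domSetOf σ) := by
  rw [isDomSet_iff_forall_exists_eq_or_adj]
  intro v
  suffices ∃ x, dominatorOf σ x = v ∨ (Gphi φ).Adj (dominatorOf σ x) v by
    obtain ⟨x, hx⟩ := this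
    exact ⟨_, mem_map_of_mem _ (mem_univ x), hx⟩
  cases v with
  | varT j | varF j | varEar j =>
    refine ⟨.inl j, ?_⟩
    cases h : σ j <;> simp [dominatorOf, h, Gphi, baseRel]
  | clause k =>
    obtain ⟨l, hl, hσl⟩ := hσ _ (List.get_mem φ.clauses k)
    obtain ⟨i, rfl⟩ := List.get_of_mem hl
    have hsat : σ (φ.lit ⟨k, i⟩).2 = (φ.lit ⟨k, i⟩).1 := hσl
    refine ⟨.inr ⟨k, i⟩, .inr ?_⟩
    simp [dominatorOf, hsat, Gphi, baseRel]
  | lit1 o =>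
    by_cases hs : σ (φ.lit o).2 = (φ.lit o).1
    · rcases hlit : φ.lit o with ⟨b, j⟩
      refine ⟨.inl j, .inr ?_⟩
      cases b <;> simp_all [dominatorOf, Gphi, baseRel]
    · refine ⟨.inr o, .inr ?_⟩
      simp [dominatorOf, hs, Gphi, baseRel]
  | lit2 o | lit3 o | litEar o =>
    refine ⟨.inr o, ?_⟩
    by_cases hs : σ (φ.lit o).2 = (φ.lit o).1 <;> simp [dominatorOf, hs, Gphi, baseRel]

end Gphi

theorem stmt_17_general {n : ℕ} (φ : CNF n) :
    (∃ D : Finset (GVert φ), IsDomSet (Gphi φ) D ∧ D.card = n + φ.t) ↔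
    φ.Satisfiable :=
  ⟨fun ⟨_, hD, hcard⟩ => Gphi.satisfiable_of_isDomSet hD hcard,
    fun ⟨_, hσ⟩ => ⟨_, Gphi.isDomSet_domSetOf hσ, Gphi.card_domSetOf _⟩⟩

theorem stmt_17 {n : ℕ} (φ : CNF n) (h2 : ∀ c ∈ φ.clauses, 2 ≤ c.length) :
    (∃ D : Finset (GVert φ), IsDomSet (Gphi φ) D ∧ D.card = n + φ.t) ↔
    φ.Satisfiable :=
  stmt_17_general φ
end
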